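/- arXiv:1906.00272 — 3 statements merged into one kernel-verified Lean document; each statement's English description precedes it below -/
import Mathlib

section
/- Let N ⊴ G be a normal subgroup of a linear algebraic group G acting on a scheme X, suppose all N-stabilizers of points of X are finite and the N-action admits a geometric quotient π : X → X/N. Then for y ∈ X/N, the stabilizer of y under the induced G/N-action is finite if and only if the G-stabilizer of some (equivalently every) point x ∈ π^{-1}(y) is finite. -/
/-- Let `N ⊴ G` act on `X`, with all `N`-stabilisers finite and with a geometric quotient
`π : X → X/N` (so `π` is surjective, its fibres are exactly the `N`-orbits, and the induced
`G/N`-action on `X/N` is compatible with `π`).  Then for `y ∈ X/N` the `G/N`-stabiliser of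
`y` is finite if and only if the `G`-stabiliser of some (equivalently, every) point
`x ∈ π⁻¹(y)` is finite. -/
theorem stabilizer_finite_iff_of_geometric_quotient
    {G X Y : Type*} [Group G] [MulAction G X]
    (N : Subgroup G) [N.Normal] [MulAction (G ⧸ N) Y]
    (π : X → Y) (hsurj : Function.Surjective π)
    (hfib : ∀ x x' : X, π x = π x' ↔ x' ∈ MulAction.orbit N x)
    (hcompat : ∀ (g : G) (x : X), (g : G ⧸ N) • π x = π (g • x))
    (hNfin : ∀ x : X, (MulAction.stabilizer N x : Set N).Finite) :
    ∀ (y : Y) (x : X), π x = y →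
      ((MulAction.stabilizer (G ⧸ N) y : Set (G ⧸ N)).Finite ↔
        (MulAction.stabilizer G x : Set G).Finite) := by
  intro y x hxy
  subst hxy
  constructor
  · intro hfin
    -- each fiber of mk over stab G x is finite
    have hKfin : ∀ q : G ⧸ N,
        ({g : G | g ∈ MulAction.stabilizer G x ∧ (g : G ⧸ N) = q}).Finite := by
      intro q
      rcases Set.eq_empty_or_nonempty
        {g : G | g ∈ MulAction.stabilizer G x ∧ (g : G ⧸ N) = q} with h | ⟨g₀, hg₀, hq₀⟩
      · rw [h]; exact Set.finite_empty
      · have hK : ((Subtype.val '' (MulAction.stabilizer N x : Set N)) : Set G).Finite :=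
          (hNfin x).image _
        refine (hK.image (fun n => g₀ * n)).subset ?_
        rintro g ⟨hg, hgq⟩
        have hmemN : g₀⁻¹ * g ∈ N := QuotientGroup.eq.mp (hq₀.trans hgq.symm)
        have hstab : (⟨g₀⁻¹ * g, hmemN⟩ : N) ∈ MulAction.stabilizer N x := by
          show (g₀⁻¹ * g) • x = x
          rw [mul_smul, MulAction.mem_stabilizer_iff.mp hg, inv_smul_eq_iff,
            MulAction.mem_stabilizer_iff.mp hg₀]
        exact ⟨g₀⁻¹ * g, ⟨⟨g₀⁻¹ * g, hmemN⟩, hstab, rfl⟩, by group⟩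
    have hsub : (MulAction.stabilizer G x : Set G) ⊆
        ⋃ q ∈ (MulAction.stabilizer (G ⧸ N) (π x) : Set (G ⧸ N)),
          {g : G | g ∈ MulAction.stabilizer G x ∧ (g : G ⧸ N) = q} := by
      intro g hg
      have hq : (g : G ⧸ N) ∈ MulAction.stabilizer (G ⧸ N) (π x) := by
        have : (g : G ⧸ N) • π x = π x := by
          rw [hcompat g x, hg]
        exact this
      exact Set.mem_biUnion hq ⟨hg, rfl⟩
    exact ((hfin.biUnion (fun q _ => hKfin q)).subset hsub)
  · intro hfin
    have hsub : (MulAction.stabilizer (G ⧸ N) (π x) : Set (G ⧸ N)) ⊆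
        (QuotientGroup.mk : G → G ⧸ N) '' (MulAction.stabilizer G x : Set G) := by
      intro q hq
      obtain ⟨g, rfl⟩ := QuotientGroup.mk_surjective q
      have hgx : π ((g : G) • x) = π x := by
        rw [← hcompat g x]; exact hq
      obtain ⟨n, hn⟩ := (hfib x (g • x)).mp hgx.symm
      have hstab : ((n : G)⁻¹ * g) • x = x := by
        rw [mul_smul, ← hn]
        show (n : G)⁻¹ • ((n : G) • x) = x
        rw [← mul_smul, inv_mul_cancel, one_smul]
      refine ⟨(n : G)⁻¹ * g, hstab, ?_⟩
      rw [QuotientGroup.mk_mul, QuotientGroup.mk_inv]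
      simp [QuotientGroup.eq_one_iff, n.2]
    exact (hfin.image _).subset hsub
end

section
/- Let N ⊴ G act on X as above with finite N-stabilizers and geometric quotient π : X → X/N. Then every G/N-orbit in X/N is closed if and only if every G-orbit in X is closed. -/
/-- Let `N ⊴ G` act on a topological space `X`, with all `N`-stabilisers finite and with a
geometric quotient `π : X → X/N` (a topological quotient map whose fibres are exactly the
`N`-orbits, compatible with the induced `G/N`-action).  Then every `G/N`-orbit in `X/N` is
closed if and only if every `G`-orbit in `X` is closed. -/
theorem orbits_closed_iff_of_geometric_quotient
    {G X Y : Type*} [Group G] [MulAction G X]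
    [TopologicalSpace X] [TopologicalSpace Y]
    (N : Subgroup G) [N.Normal] [MulAction (G ⧸ N) Y]
    (π : X → Y) (hquot : Topology.IsQuotientMap π)
    (hfib : ∀ x x' : X, π x = π x' ↔ x' ∈ MulAction.orbit N x)
    (hcompat : ∀ (g : G) (x : X), (g : G ⧸ N) • π x = π (g • x))
    (hNfin : ∀ x : X, (MulAction.stabilizer N x : Set N).Finite) :
    (∀ y : Y, IsClosed (MulAction.orbit (G ⧸ N) y)) ↔
      (∀ x : X, IsClosed (MulAction.orbit G x)) := by
  have key : ∀ x : X, π ⁻¹' (MulAction.orbit (G ⧸ N) (π x)) = MulAction.orbit G x := by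
    intro x
    ext x'
    constructor
    · rintro ⟨q, hq⟩
      obtain ⟨g, rfl⟩ := QuotientGroup.mk_surjective q
      simp only [hcompat] at hq
      obtain ⟨n, rfl⟩ := (hfib _ _).mp hq
      exact ⟨(n : G) * g, by simp [mul_smul, Subgroup.smul_def]⟩
    · rintro ⟨g, rfl⟩
      exact ⟨(g : G ⧸ N), hcompat g x⟩
  constructor
  · intro h x
    rw [← key x]
    exact (h (π x)).preimage hquot.continuous
  · intro h y
    obtain ⟨x, rfl⟩ := hquot.surjective y
    rw [← hquot.isClosed_preimage, key x]
    exact h x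
end

section
/- Let f ∈ k[x_0,...,x_n] be weighted-homogeneous of degree d with deg x_i = a_i, d divisible by a_n where a_n = max a_i, and suppose f contains no monomial in the variables y_1,...,y_{n_l} of maximal weight alone (i.e. every monomial of f involves some variable of non-maximal weight). Then f is not quasismooth: the point with all non-maximal-weight coordinates zero and one maximal-weight coordinate equal to 1 is a common zero of all partial derivatives of f. -/
open MvPolynomial

lemma aux_eval_monomial_zero {k : Type*} [Field k] {n : ℕ} (j₀ : Fin (n + 1))
    (m : Fin (n + 1) →₀ ℕ) (c : k) (i : Fin (n + 1)) (hij : i ≠ j₀) (hmi : m i ≠ 0) :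
    eval (fun i => if i = j₀ then (1 : k) else 0) (monomial m c) = 0 := by
  rw [eval_monomial, Finsupp.prod,
    Finset.prod_eq_zero (Finsupp.mem_support_iff.2 hmi), mul_zero]
  simp [hij, zero_pow hmi]

/-- Let `f ∈ k[x_0,…,x_n]` be weighted-homogeneous of degree `d` with `deg x_i = a_i`,
where the maximal weight `a_{j₀} = max aᵢ` divides `d`.  If every monomial of `f` involves
some variable of non-maximal weight (no monomial of `f` is a monomial in the maximal-weight
variables alone), then `f` is not quasismooth: the nonzero point with coordinate `1` at the
maximal-weight variable `x_{j₀}` and `0` elsewhere is a common zero of `f` and all of its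
partial derivatives. -/
theorem not_quasismooth_of_no_pure_maximal_weight_monomial
    {k : Type*} [Field k] [CharZero k]
    {n : ℕ} (a : Fin (n + 1) → ℕ) (ha : ∀ i, 0 < a i) (d : ℕ)
    (j₀ : Fin (n + 1)) (hmax : ∀ i, a i ≤ a j₀) (hdvd : a j₀ ∣ d)
    (f : MvPolynomial (Fin (n + 1)) k)
    (hf : IsWeightedHomogeneous a f d)
    (hmono : ∀ m ∈ f.support, ∃ i, a i < a j₀ ∧ m i ≠ 0) :
    ((fun i => if i = j₀ then (1 : k) else 0) : Fin (n + 1) → k) ≠ 0 ∧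
    eval (fun i => if i = j₀ then (1 : k) else 0) f = 0 ∧
    ∀ s, eval (fun i => if i = j₀ then (1 : k) else 0) (pderiv s f) = 0 := by
  set v : Fin (n + 1) → k := fun i => if i = j₀ then (1 : k) else 0 with hv
  refine ⟨?_, ?_, ?_⟩
  · intro h
    have := congrFun h j₀
    simp [hv] at this
  · conv_lhs => rw [← f.support_sum_monomial_coeff]
    rw [map_sum]
    refine Finset.sum_eq_zero fun m hm => ?_
    obtain ⟨i, hi, hmi⟩ := hmono m hm
    exact aux_eval_monomial_zero j₀ m _ i (fun h => absurd (h ▸ hi) (lt_irrefl _)) hmi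
  · intro s
    conv_lhs => rw [← f.support_sum_monomial_coeff]
    rw [map_sum, map_sum]
    refine Finset.sum_eq_zero fun m hm => ?_
    rw [pderiv_monomial]
    by_cases hms : m s = 0
    · simp [hms]
    obtain ⟨i, hi, hmi⟩ := hmono m hm
    have hij₀ : i ≠ j₀ := fun h => absurd (h ▸ hi) (lt_irrefl _)
    by_cases his : i = s
    · subst his
      -- i = s, a s < a j₀
      by_cases hex : ∃ j, j ≠ j₀ ∧ (m - Finsupp.single i 1 : Fin (n + 1) →₀ ℕ) j ≠ 0
      · obtain ⟨j, hj, hjm⟩ := hex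
        exact aux_eval_monomial_zero j₀ _ _ j hj hjm
      · exfalso
        push_neg at hex
        -- m s = 1 and m j = 0 for j ∉ {j₀, i}
        have hm1 : m i = 1 := by
          have := hex i hij₀
          simp only [Finsupp.coe_tsub, Pi.sub_apply, Finsupp.single_eq_same] at this
          omega
        have hmeq : m = Finsupp.single j₀ (m j₀) + Finsupp.single i 1 := by
          ext j
          by_cases hj : j = j₀
          · subst hj
            simp [Finsupp.single_eq_of_ne' hij₀]
          by_cases hji : j = i
          · subst hji
            simp [hm1, Finsupp.single_eq_of_ne' (fun h => hj h.symm)]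
          · have := hex j hj
            simp only [Finsupp.coe_tsub, Pi.sub_apply,
              Finsupp.single_eq_of_ne' (fun h => hji h.symm)] at this
            simp [Finsupp.single_eq_of_ne' (fun h => hj h.symm),
              Finsupp.single_eq_of_ne' (fun h => hji h.symm)]
            omega
        have hdeg : (Finsupp.weight a) m = d := hf (MvPolynomial.mem_support_iff.1 hm)
        rw [hmeq] at hdeg
        simp [map_add, Finsupp.weight_apply, Finsupp.sum_single_index, smul_eq_mul] at hdeg
        -- hdeg : m j₀ * a j₀ + a i = d
        have hdvd2 : a j₀ ∣ a i := by
          have h1 : a j₀ ∣ m j₀ * a j₀ := Dvd.intro_left _ rfl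
          have h2 : a j₀ ∣ m j₀ * a j₀ + a i := by rw [hdeg]; exact hdvd
          exact (Nat.dvd_add_right h1).1 h2
        exact absurd (Nat.le_of_dvd (ha i) hdvd2) (not_le.2 hi)
    · have : (m - Finsupp.single s 1 : Fin (n + 1) →₀ ℕ) i ≠ 0 := by
        simp only [Finsupp.coe_tsub, Pi.sub_apply, Finsupp.single_eq_of_ne'
          (fun h => his h.symm)]
        omega
      exact aux_eval_monomial_zero j₀ _ _ i hij₀ this
end
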